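/- For every integer n ≥ 1, ∑_{j=1}^{n} H_{j,2}/((j+1)^2 (j+2)) = (1/2)H_{n,2}^2 − H_{n,2} − (1/2)H_{n,4} + 1 + H_{n,2}/(n+2) − 1/(n+1) + H_{n,2}/(n+1)^2. Consequently, ∑_{j=1}^{n} H_{j,2}/((j+1)^2 (j+2)) → π⁴/120 − π²/6 + 1 as n → ∞. -/

import Mathlib

open Finset Filter Real Topology

/-- Generalized harmonic number `H (n, m) = ∑_{i=1}^{n} 1/i^m` as a real number. -/
noncomputable def H (n m : ℕ) : ℝ := ∑ i ∈ Finset.Icc 1 n, (1 : ℝ) / (i : ℝ) ^ m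

/-- Apéry's constant `ζ(3) = ∑_{k=1}^{∞} 1/k³`. -/
noncomputable def zeta3 : ℝ := ∑' k : ℕ, 1 / ((k : ℝ) + 1) ^ 3

lemma H_succ (n m : ℕ) : H (n + 1) m = H n m + 1 / ((n : ℝ) + 1) ^ m := by
  unfold H
  rw [Finset.sum_Icc_succ_top (by omega)]
  push_cast
  ring

lemma H_eq_range (n m : ℕ) (hm : m ≠ 0) : H n m = ∑ i ∈ Finset.range (n + 1), (1 : ℝ) / (i : ℝ) ^ m := by
  induction n with
  | zero => simp [H, zero_pow hm]
  | succ k ih =>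
    rw [H_succ, Finset.sum_range_succ, ih]
    push_cast
    ring

lemma H_tendsto {m : ℕ} (hm : m ≠ 0) {L : ℝ} (h : HasSum (fun n : ℕ => (1 : ℝ) / (n : ℝ) ^ m) L) :
    Tendsto (fun n : ℕ => H n m) atTop (nhds L) := by
  have := h.tendsto_sum_nat
  have h2 := this.comp (tendsto_add_atTop_nat 1)
  refine h2.congr fun n => ?_
  simp [H_eq_range _ _ hm, Function.comp]

theorem sum_H2_div_shift1sq_shift2 :
    (∀ n : ℕ, 1 ≤ n →
      ∑ j ∈ Finset.Icc 1 n, H j 2 / (((j : ℝ) + 1) ^ 2 * ((j : ℝ) + 2)) =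
        (1 / 2) * (H n 2) ^ 2 - H n 2 - (1 / 2) * H n 4 + 1
          + H n 2 / ((n : ℝ) + 2) - 1 / ((n : ℝ) + 1) + H n 2 / ((n : ℝ) + 1) ^ 2) ∧
    Tendsto (fun n : ℕ =>
        ∑ j ∈ Finset.Icc 1 n, H j 2 / (((j : ℝ) + 1) ^ 2 * ((j : ℝ) + 2)))
      atTop (nhds (π ^ 4 / 120 - π ^ 2 / 6 + 1)) := by
  have key : ∀ n : ℕ, 1 ≤ n →
      ∑ j ∈ Finset.Icc 1 n, H j 2 / (((j : ℝ) + 1) ^ 2 * ((j : ℝ) + 2)) =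
        (1 / 2) * (H n 2) ^ 2 - H n 2 - (1 / 2) * H n 4 + 1
          + H n 2 / ((n : ℝ) + 2) - 1 / ((n : ℝ) + 1) + H n 2 / ((n : ℝ) + 1) ^ 2 := by
    intro n hn
    induction n with
    | zero => omega
    | succ k ih =>
      rcases Nat.eq_or_lt_of_le hn with h1 | h1
      · -- k + 1 = 1, so k = 0
        have hk : k = 0 := by omega
        subst hk
        norm_num [H]
      · have hk : 1 ≤ k := by omega
        rw [Finset.sum_Icc_succ_top (by omega), ih hk,
          H_succ k 2, H_succ k 4]
        push_cast
        have h1 : ((k : ℝ) + 1) ≠ 0 := by positivity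
        have h2 : ((k : ℝ) + 2) ≠ 0 := by positivity
        have h3 : ((k : ℝ) + 1 + 1) ≠ 0 := by positivity
        have h4 : ((k : ℝ) + 1 + 2) ≠ 0 := by positivity
        field_simp
        ring
    
  refine ⟨key, ?_⟩
  have h2 : Tendsto (fun n : ℕ => H n 2) atTop (nhds (π ^ 2 / 6)) :=
    H_tendsto two_ne_zero hasSum_zeta_two
  have h4 : Tendsto (fun n : ℕ => H n 4) atTop (nhds (π ^ 4 / 90)) :=
    H_tendsto four_ne_zero hasSum_zeta_four
  have hz1 : Tendsto (fun n : ℕ => 1 / ((n : ℝ) + 2)) atTop (nhds 0) := by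
    have := (tendsto_one_div_add_atTop_nhds_zero_nat (𝕜 := ℝ)).comp (tendsto_add_atTop_nat 1)
    refine this.congr fun n => ?_
    simp [Function.comp]
    ring_nf
  have hz2 : Tendsto (fun n : ℕ => 1 / ((n : ℝ) + 1)) atTop (nhds 0) :=
    tendsto_one_div_add_atTop_nhds_zero_nat
  have hz3 : Tendsto (fun n : ℕ => 1 / ((n : ℝ) + 1) ^ 2) atTop (nhds 0) := by
    have := hz2.mul hz2
    simpa [div_mul_div_comm, ← pow_two] using this
  have hR : Tendsto (fun n : ℕ =>
      (1 / 2) * (H n 2) ^ 2 - H n 2 - (1 / 2) * H n 4 + 1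
        + H n 2 / ((n : ℝ) + 2) - 1 / ((n : ℝ) + 1) + H n 2 / ((n : ℝ) + 1) ^ 2)
      atTop (nhds (π ^ 4 / 120 - π ^ 2 / 6 + 1)) := by
    have : Tendsto (fun n : ℕ =>
        (1 / 2) * (H n 2) ^ 2 - H n 2 - (1 / 2) * H n 4 + 1
          + H n 2 * (1 / ((n : ℝ) + 2)) - 1 / ((n : ℝ) + 1) + H n 2 * (1 / ((n : ℝ) + 1) ^ 2))
        atTop (nhds ((1 / 2) * (π ^ 2 / 6) ^ 2 - π ^ 2 / 6 - (1 / 2) * (π ^ 4 / 90) + 1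
          + (π ^ 2 / 6) * 0 - 0 + (π ^ 2 / 6) * 0)) := by
      exact ((((((tendsto_const_nhds.mul (h2.pow 2)).sub h2).sub
        (tendsto_const_nhds.mul h4)).add tendsto_const_nhds).add (h2.mul hz1)).sub hz2).add
        (h2.mul hz3)
    have heq : (1 / 2) * (π ^ 2 / 6) ^ 2 - π ^ 2 / 6 - (1 / 2) * (π ^ 4 / 90) + 1
        + (π ^ 2 / 6) * 0 - 0 + (π ^ 2 / 6) * 0 = π ^ 4 / 120 - π ^ 2 / 6 + 1 := by ring
    rw [heq] at this
    refine this.congr fun n => ?_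
    rw [mul_one_div, mul_one_div]
  refine Tendsto.congr' ?_ hR
  filter_upwards [eventually_ge_atTop 1] with n hn
  exact (key n hn).symm
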